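/- The graph K_{3,3} minus one edge (K_{3,3}^-) is a minor of the graph G_3. -/

import Mathlib

/-- `G₃`, the cube with one corner cut off: with vertices labelled
`x = 0, y = 1, z = 2, p = 3, q = 4, r = 5, w = 6`, its edges are
`xy, xz, yz, px, py, qx, qz, ry, rz, wp, wq, wr`. -/
def G3 : SimpleGraph (Fin 7) :=
  SimpleGraph.fromEdgeSet
    {s(0, 1), s(0, 2), s(1, 2), s(3, 0), s(3, 1), s(4, 0), s(4, 2),
     s(5, 1), s(5, 2), s(6, 3), s(6, 4), s(6, 5)}

/-- `H` is a minor of `G`: there are disjoint connected branch sets in `G`, one for each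
vertex of `H`, such that every edge of `H` is realized by an edge of `G` between the
corresponding branch sets. -/
def IsMinor {β α : Type*} (H : SimpleGraph β) (G : SimpleGraph α) : Prop :=
  ∃ f : α → Option β,
    (∀ b : β, ∃ a : α, f a = some b) ∧
    (∀ b : β, (G.induce {a : α | f a = some b}).Connected) ∧
    (∀ b₁ b₂ : β, H.Adj b₁ b₂ →
      ∃ a₁ a₂ : α, f a₁ = some b₁ ∧ f a₂ = some b₂ ∧ G.Adj a₁ a₂)

/-- `K₃,₃` with one edge removed. -/
def K33minus : SimpleGraph (Fin 3 ⊕ Fin 3) :=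
  (completeBipartiteGraph (Fin 3) (Fin 3)).deleteEdges {s(Sum.inl 0, Sum.inr 0)}

namespace SimpleGraph

instance {V W : Type*} : DecidableRel (completeBipartiteGraph V W).Adj :=
  fun _ _ => inferInstanceAs (Decidable (_ ∨ _))

theorem IsClique.induce_connected {α : Type*} {G : SimpleGraph α} {s : Set α}
    (hs : G.IsClique s) (hne : s.Nonempty) : (G.induce s).Connected := by
  have := hne.to_subtype
  rw [induce_eq_top.mpr hs]
  exact connected_top

end SimpleGraph

open SimpleGraph

theorem isMinor_of_surjective {α β : Type*} {H : SimpleGraph β} {G : SimpleGraph α} (f : α → β)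
    (hf : Function.Surjective f) (hfib : ∀ a₁ a₂, f a₁ = f a₂ → a₁ ≠ a₂ → G.Adj a₁ a₂)
    (hlift : ∀ b₁ b₂, H.Adj b₁ b₂ → ∃ a₁ a₂, f a₁ = b₁ ∧ f a₂ = b₂ ∧ G.Adj a₁ a₂) :
    IsMinor H G := by
  refine ⟨some ∘ f, fun b => (hf b).imp fun a ha => congrArg some ha, fun b => ?_,
    fun b₁ b₂ h => ?_⟩
  · have hfiber : {a | (some ∘ f) a = some b} = f ⁻¹' {b} := by ext; simp
    rw [hfiber]
    refine IsClique.induce_connected ?_ (hf b)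
    rintro a₁ rfl a₂ h₂ hne
    exact hfib a₁ a₂ h₂.symm hne
  · simpa using hlift b₁ b₂ h

instance : DecidableRel G3.Adj := by unfold G3; infer_instance
instance : DecidableRel K33minus.Adj := by unfold K33minus; infer_instance

/-- Contract `yz` in `G₃`, then send `x, yz, w` to one side and `r, p, q` to the other;
`xr` is the one non-edge. -/
def contractYZ : Fin 7 → Fin 3 ⊕ Fin 3 :=
  ![.inl 0, .inl 1, .inl 1, .inr 1, .inr 2, .inr 0, .inl 2]

/-- `K₃,₃⁻` is a minor of `G₃`. -/
theorem K33minus_isMinor_G3 : IsMinor K33minus G3 :=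
  isMinor_of_surjective contractYZ (by decide) (by decide) (by decide)
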